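/- Let a_1, a_2 be coprime positive integers. For every k ≥ 1, the smallest nonnegative integer with exactly k representations by (a_1, a_2) is (k-1)·a_1·a_2, and the number of nonnegative integers with exactly k representations is a_1·a_2. -/
import Mathlib


/-- Number of representations of `t` as `a1*x1 + a2*x2` with `x1, x2 : ℕ`. -/
noncomputable def numRep2 (a1 a2 : ℕ) (t : ℕ) : ℕ :=
  Nat.card {x : ℕ × ℕ // a1 * x.1 + a2 * x.2 = t}

namespace Stmt17Aux

def rset (a1 a2 t : ℕ) : Finset (ℕ × ℕ) :=
  (Finset.range (t+1) ×ˢ Finset.range (t+1)).filter fun x => a1 * x.1 + a2 * x.2 = t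

lemma mem_rset {a1 a2 : ℕ} (h1 : 0 < a1) (h2 : 0 < a2) {t : ℕ} {x : ℕ × ℕ} :
    x ∈ rset a1 a2 t ↔ a1 * x.1 + a2 * x.2 = t := by
  simp only [rset, Finset.mem_filter, Finset.mem_product, Finset.mem_range]
  constructor
  · tauto
  · intro h
    refine ⟨⟨?_, ?_⟩, h⟩ <;> nlinarith

lemma numRep2_eq {a1 a2 : ℕ} (h1 : 0 < a1) (h2 : 0 < a2) (t : ℕ) :
    numRep2 a1 a2 t = (rset a1 a2 t).card := by
  have hset : {x : ℕ × ℕ | a1 * x.1 + a2 * x.2 = t} = ↑(rset a1 a2 t) := by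
    ext x; simp [mem_rset h1 h2]
  calc Nat.card {x : ℕ × ℕ // a1 * x.1 + a2 * x.2 = t}
      = Set.ncard {x : ℕ × ℕ | a1 * x.1 + a2 * x.2 = t} :=
        (Nat.card_coe_set_eq _).symm
    _ = (rset a1 a2 t).card := by rw [hset, Set.ncard_coe_finset]

lemma uniq {a1 a2 : ℕ} (h2 : 0 < a2) (hcop : Nat.Coprime a1 a2)
    {t x1 x2 y1 y2 : ℕ} (hx1 : x1 < a2) (hy1 : y1 < a2)
    (hx : a1 * x1 + a2 * x2 = t) (hy : a1 * y1 + a2 * y2 = t) : x1 = y1 ∧ x2 = y2 := by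
  have hm : a1 * x1 ≡ a1 * y1 [MOD a2] := by
    show a1 * x1 % a2 = a1 * y1 % a2
    calc a1 * x1 % a2 = (a1 * x1 + a2 * x2) % a2 := (Nat.add_mul_mod_self_left _ _ _).symm
      _ = (a1 * y1 + a2 * y2) % a2 := by rw [hx, hy]
      _ = a1 * y1 % a2 := Nat.add_mul_mod_self_left _ _ _
  have hxy : x1 ≡ y1 [MOD a2] := hm.cancel_left_of_coprime hcop.symm
  have he1 : x1 = y1 := by
    have h := hxy
    rwa [Nat.ModEq, Nat.mod_eq_of_lt hx1, Nat.mod_eq_of_lt hy1] at h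
  refine ⟨he1, ?_⟩
  rw [he1] at hx
  have hc : a2 * x2 = a2 * y2 := Nat.add_left_cancel (hx.trans hy.symm)
  exact Nat.eq_of_mul_eq_mul_left h2 hc

lemma card_step {a1 a2 : ℕ} (h1 : 0 < a1) (h2 : 0 < a2) (hcop : Nat.Coprime a1 a2) (t : ℕ) :
    (rset a1 a2 (t + a1 * a2)).card = (rset a1 a2 t).card + 1 := by
  haveI : NeZero a2 := ⟨h2.ne'⟩
  set w : ZMod a2 := (t : ZMod a2) * (a1 : ZMod a2)⁻¹ with hw
  set u : ℕ := w.val with hudef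
  have hu : u < a2 := ZMod.val_lt w
  have hmod : a1 * u ≡ t [MOD a2] := by
    have ha1 : IsUnit (a1 : ZMod a2) := (ZMod.isUnit_iff_coprime a1 a2).mpr hcop
    rw [← ZMod.natCast_eq_natCast_iff]
    push_cast
    have hcu : (u : ZMod a2) = w := by
      simp [hudef, ZMod.natCast_val, ZMod.cast_id]
    rw [hcu, hw, mul_comm ((t : ZMod a2)) _, ← mul_assoc, ZMod.mul_inv_of_unit _ ha1, one_mul]
  have hle : a1 * u ≤ t + a1 * a2 := by nlinarith
  have hmod2 : a1 * u ≡ t + a1 * a2 [MOD a2] := by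
    show a1 * u % a2 = (t + a1 * a2) % a2
    rw [Nat.add_mul_mod_self_right]
    exact hmod
  obtain ⟨v, hv⟩ := (Nat.modEq_iff_dvd' hle).mp hmod2
  have huv : a1 * u + a2 * v = t + a1 * a2 := by
    rw [← hv, Nat.add_sub_cancel' hle]
  classical
  have hA : (rset a1 a2 (t + a1 * a2)).filter (fun x => x.1 < a2) = {(u, v)} := by
    ext x
    simp only [Finset.mem_filter, mem_rset h1 h2, Finset.mem_singleton]
    constructor
    · rintro ⟨hx, hlt⟩
      obtain ⟨e1, e2⟩ := uniq h2 hcop hlt hu hx huv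
      exact Prod.ext e1 e2
    · rintro rfl
      exact ⟨huv, hu⟩
  have hB : (rset a1 a2 t).card
      = ((rset a1 a2 (t + a1 * a2)).filter (fun x => ¬ x.1 < a2)).card := by
    apply Finset.card_bij (fun x _ => (x.1 + a2, x.2))
    · intro x hx
      rw [mem_rset h1 h2] at hx
      simp only [Finset.mem_filter, mem_rset h1 h2]
      constructor
      · show a1 * (x.1 + a2) + a2 * x.2 = t + a1 * a2
        rw [Nat.mul_add, ← hx]; ring
      · omega
    · intro x hx y hy h
      rw [Prod.ext_iff] at h ⊢
      simp only at h
      exact ⟨by omega, h.2⟩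
    · intro y hy
      simp only [Finset.mem_filter, mem_rset h1 h2] at hy
      obtain ⟨hyeq, hyge⟩ := hy
      push_neg at hyge
      obtain ⟨c, hc⟩ := Nat.exists_eq_add_of_le hyge
      refine ⟨(c, y.2), ?_, ?_⟩
      · rw [mem_rset h1 h2]
        have hx : a1 * a2 + (a1 * c + a2 * y.2) = a1 * a2 + t := by
          rw [hc] at hyeq; nlinarith
        exact Nat.add_left_cancel hx
      · rw [Prod.ext_iff]
        exact ⟨by omega, rfl⟩
  have hsplit := Finset.card_filter_add_card_filter_not
    (s := rset a1 a2 (t + a1 * a2)) (p := fun x => x.1 < a2)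
  rw [hA] at hsplit
  simp only [Finset.card_singleton] at hsplit
  omega

lemma f_step {a1 a2 : ℕ} (h1 : 0 < a1) (h2 : 0 < a2) (hcop : Nat.Coprime a1 a2) (t : ℕ) :
    numRep2 a1 a2 (t + a1 * a2) = numRep2 a1 a2 t + 1 := by
  rw [numRep2_eq h1 h2, numRep2_eq h1 h2, card_step h1 h2 hcop]

lemma f_add {a1 a2 : ℕ} (h1 : 0 < a1) (h2 : 0 < a2) (hcop : Nat.Coprime a1 a2) (r q : ℕ) :
    numRep2 a1 a2 (r + q * (a1 * a2)) = numRep2 a1 a2 r + q := by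
  induction q with
  | zero => simp
  | succ n ih =>
    have he : r + (n + 1) * (a1 * a2) = (r + n * (a1 * a2)) + a1 * a2 := by ring
    rw [he, f_step h1 h2 hcop, ih]
    omega

lemma f_zero {a1 a2 : ℕ} (h1 : 0 < a1) (h2 : 0 < a2) : numRep2 a1 a2 0 = 1 := by
  rw [numRep2_eq h1 h2]
  have : rset a1 a2 0 = {(0, 0)} := by
    ext x
    simp only [mem_rset h1 h2, Finset.mem_singleton, Prod.ext_iff]
    constructor
    · intro h
      have hx1 : a1 * x.1 = 0 := by omega
      have hx2 : a2 * x.2 = 0 := by omega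
      constructor
      · rcases Nat.mul_eq_zero.mp hx1 with h | h
        · omega
        · exact h
      · rcases Nat.mul_eq_zero.mp hx2 with h | h
        · omega
        · exact h
    · rintro ⟨ha, hb⟩
      rw [ha, hb]; ring
  rw [this, Finset.card_singleton]

lemma f_small {a1 a2 : ℕ} (h1 : 0 < a1) (h2 : 0 < a2) (hcop : Nat.Coprime a1 a2)
    {t : ℕ} (ht : t < a1 * a2) : numRep2 a1 a2 t ≤ 1 := by
  rw [numRep2_eq h1 h2]
  apply Finset.card_le_one.mpr
  intro x hx y hy
  rw [mem_rset h1 h2] at hx hy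
  have hx1 : x.1 < a2 := by nlinarith
  have hy1 : y.1 < a2 := by nlinarith
  obtain ⟨e1, e2⟩ := uniq h2 hcop hx1 hy1 hx hy
  exact Prod.ext e1 e2

lemma f_decomp {a1 a2 : ℕ} (h1 : 0 < a1) (h2 : 0 < a2) (hcop : Nat.Coprime a1 a2) (t : ℕ) :
    numRep2 a1 a2 t = numRep2 a1 a2 (t % (a1 * a2)) + t / (a1 * a2) := by
  set N := a1 * a2 with hN
  calc numRep2 a1 a2 t = numRep2 a1 a2 (t % N + (t / N) * N) := by
        rw [Nat.mul_comm (t / N) N, Nat.mod_add_div]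
    _ = numRep2 a1 a2 (t % N) + t / N := f_add h1 h2 hcop _ _

end Stmt17Aux

open Stmt17Aux in
theorem stmt17 (a1 a2 : ℕ) (h1 : 0 < a1) (h2 : 0 < a2)
    (hcop : Nat.Coprime a1 a2) (k : ℕ) (hk : 1 ≤ k) :
    IsLeast {t : ℕ | numRep2 a1 a2 t = k} ((k - 1) * a1 * a2) ∧
    Nat.card {t : ℕ // numRep2 a1 a2 t = k} = a1 * a2 := by
  set N := a1 * a2 with hN
  have hNpos : 0 < N := Nat.mul_pos h1 h2
  have hmem : numRep2 a1 a2 ((k - 1) * a1 * a2) = k := by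
    have he : (k - 1) * a1 * a2 = 0 + (k - 1) * (a1 * a2) := by ring
    rw [he, f_add h1 h2 hcop, f_zero h1 h2]
    omega
  constructor
  · constructor
    · exact hmem
    · intro t ht
      simp only [Set.mem_setOf_eq] at ht
      have hd := f_decomp h1 h2 hcop t
      rw [← hN] at hd
      have hsm : numRep2 a1 a2 (t % N) ≤ 1 := f_small h1 h2 hcop (Nat.mod_lt _ hNpos)
      have hq : k - 1 ≤ t / N := by omega
      calc (k - 1) * a1 * a2 = (k - 1) * N := by rw [hN, mul_assoc]
        _ ≤ (t / N) * N := Nat.mul_le_mul_right N hq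
        _ ≤ t := Nat.div_mul_le_self t N
  · -- cardinality
    classical
    set g : ℕ → ℕ := fun r => N * (k - numRep2 a1 a2 r) + r with hg
    have hginj : Set.InjOn g ↑(Finset.range N) := by
      intro r1 hr1 r2 hr2 h
      simp only [Finset.coe_range, Set.mem_Iio] at hr1 hr2
      have e1 : g r1 % N = r1 := by
        rw [hg]; simp only []
        rw [Nat.mul_add_mod, Nat.mod_eq_of_lt hr1]
      have e2 : g r2 % N = r2 := by
        rw [hg]; simp only []
        rw [Nat.mul_add_mod, Nat.mod_eq_of_lt hr2]
      rw [← e1, ← e2, h]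
    have hsetEq : {t : ℕ | numRep2 a1 a2 t = k} = ↑((Finset.range N).image g) := by
      ext t
      simp only [Set.mem_setOf_eq, Finset.coe_image, Finset.coe_range, Set.mem_image,
        Set.mem_Iio]
      constructor
      · intro ht
        refine ⟨t % N, Nat.mod_lt _ hNpos, ?_⟩
        have hd := f_decomp h1 h2 hcop t
        rw [← hN] at hd
        have hsm : numRep2 a1 a2 (t % N) ≤ 1 := f_small h1 h2 hcop (Nat.mod_lt _ hNpos)
        have hq : k - numRep2 a1 a2 (t % N) = t / N := by omega
        rw [hg]
        simp only []
        rw [hq, Nat.div_add_mod]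
      · rintro ⟨r, hr, rfl⟩
        have hsm : numRep2 a1 a2 r ≤ 1 := f_small h1 h2 hcop hr
        have he : g r = r + (k - numRep2 a1 a2 r) * N := by rw [hg]; ring
        rw [he, f_add h1 h2 hcop]
        omega
    calc Nat.card {t : ℕ // numRep2 a1 a2 t = k}
        = Set.ncard {t : ℕ | numRep2 a1 a2 t = k} := (Nat.card_coe_set_eq _).symm
      _ = ((Finset.range N).image g).card := by rw [hsetEq, Set.ncard_coe_finset]
      _ = (Finset.range N).card := Finset.card_image_of_injOn hginj
      _ = a1 * a2 := by rw [Finset.card_range]
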